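/- arXiv:2108.10238 — 5 statements merged into one kernel-verified Lean document; each statement's English description precedes it below -/
import Mathlib

section
/- The function x ↦ sin(x)/x (extended by 1 at x = 0) attains a global minimum on ℝ \ {0}, and its minimum value c₀ := min_{x ≠ 0} sin(x)/x satisfies -0.2173 < c₀ < -0.2172. -/
/-!
Since `sinc` is even and continuous, it has a minimum on `[4, 5]`, and this is global because
outside `[4, 5]` one has `sin y ≥ -0.2172 y` for `y > 0` (`sin ≥ 0` on `[0, π]`,
`sin y ≥ π - y` beyond `π`, `sin ≥ -1` beyond `5`). Near the minimiser `x₀ ≈ 4.4934` write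
`x = 3π/2 - w`, so that `sin x = -cos w`: the bound `cos w ≥ 1 - w²/2` at `w = 0.22` puts the
minimum below `-0.2172`, and the quartic Taylor bound for `cos` on `|w| ≤ 1` keeps
`sin x > -0.2173 x` on `[4, 5]`.
-/

open Real Set

lemma Real.sinc_abs (x : ℝ) : sinc |x| = sinc x := by
  rcases abs_choice x with h | h <;> simp [h]

lemma Real.neg_sub_pi_le_sin {x : ℝ} (hx : π ≤ x) : -(x - π) ≤ sin x := by
  have := sin_le (sub_nonneg.2 hx)
  rw [sin_sub_pi] at this
  linarith

lemma Real.sin_three_pi_div_two_sub (x : ℝ) : sin (3 * π / 2 - x) = -cos x := by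
  rw [show 3 * π / 2 - x = (π / 2 - x) + π by ring, sin_add_pi, sin_pi_div_two_sub]

lemma neg_mul_le_sin_of_notMem_Icc {x : ℝ} (hx : 0 ≤ x) (h : x ∉ Icc 4 5) :
    -0.2172 * x ≤ sin x := by
  have := pi_gt_d6
  rcases le_or_gt x π with hπ | hπ
  · nlinarith [sin_nonneg_of_nonneg_of_le_pi hx hπ]
  rcases not_and_or.1 h with h4 | h5
  · nlinarith [neg_sub_pi_le_sin hπ.le]
  · nlinarith [neg_one_le_sin x]

lemma neg_le_sinc_of_abs_notMem_Icc {x : ℝ} (h : |x| ∉ Icc 4 5) : -0.2172 ≤ sinc x := by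
  rw [← sinc_abs]
  rcases (abs_nonneg x).eq_or_lt with h0 | h0
  · rw [← h0, sinc_zero]
    norm_num
  rw [sinc_of_ne_zero h0.ne', le_div_iff₀ h0]
  exact neg_mul_le_sin_of_notMem_Icc h0.le h

lemma cos_lt_mul_three_pi_div_two_sub {x : ℝ} (hx : |x| ≤ 1) :
    cos x < 0.2173 * (3 * π / 2 - x) := by
  have hcos := (abs_le.1 (cos_bound hx)).2
  rw [Even.pow_abs (by decide)] at hcos
  have hsq : x ^ 2 ≤ 1 := (sq_le_one_iff_abs_le_one x).2 hx
  nlinarith [pi_gt_d6, mul_nonneg (sub_nonneg.2 hsq) (sq_nonneg x), sq_nonneg (x ^ 2 - 0.05),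
    sq_nonneg (x - 0.22)]

lemma neg_mul_lt_sin {x : ℝ} (hx : 0 < x) : -0.2173 * x < sin x := by
  by_cases h : x ∈ Icc 4 5
  · have hw : |3 * π / 2 - x| ≤ 1 :=
      abs_le.2 ⟨by linarith [h.2, pi_gt_d6], by linarith [h.1, pi_lt_d6]⟩
    have hcos := cos_lt_mul_three_pi_div_two_sub hw
    have hsin := sin_three_pi_div_two_sub (3 * π / 2 - x)
    rw [sub_sub_cancel] at hcos hsin
    linarith
  · nlinarith [neg_mul_le_sin_of_notMem_Icc hx.le h]

lemma sin_three_pi_div_two_sub_lt :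
    sin (3 * π / 2 - 0.22) < -0.2172 * (3 * π / 2 - 0.22) := by
  rw [sin_three_pi_div_two_sub]
  have := one_sub_sq_div_two_le_cos (x := 0.22)
  norm_num at this ⊢
  linarith [pi_lt_d6]

/-- The function `x ↦ sin x / x` attains a global minimum on `ℝ \ {0}`, and the minimum
value `c₀` satisfies `-0.2173 < c₀ < -0.2172`. -/
theorem stmt_2 :
    ∃ x : ℝ, x ≠ 0 ∧ (∀ y : ℝ, y ≠ 0 → Real.sin x / x ≤ Real.sin y / y) ∧
      -0.2173 < Real.sin x / x ∧ Real.sin x / x < -0.2172 := by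
  obtain ⟨x, hx, hmin⟩ := isCompact_Icc.exists_isMinOn
    (nonempty_Icc.2 (by norm_num : (4 : ℝ) ≤ 5)) continuous_sinc.continuousOn
  have hx0 : 0 < x := by linarith [hx.1]
  have hp : 3 * π / 2 - 0.22 ∈ Icc (4 : ℝ) 5 := ⟨by linarith [pi_gt_d6], by linarith [pi_lt_d6]⟩
  have hlt : sinc x < -0.2172 := by
    refine (hmin hp).trans_lt ?_
    rw [sinc_of_ne_zero (by linarith [hp.1]), div_lt_iff₀ (by linarith [hp.1])]
    exact sin_three_pi_div_two_sub_lt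
  have hglobal : ∀ y, sinc x ≤ sinc y := fun y => by
    by_cases hy : |y| ∈ Icc 4 5
    · simpa [sinc_abs] using hmin hy
    · linarith [neg_le_sinc_of_abs_notMem_Icc hy]
  rw [sinc_of_ne_zero hx0.ne'] at hlt hglobal
  refine ⟨x, hx0.ne', fun y hy => (hglobal y).trans_eq (sinc_of_ne_zero hy), ?_, hlt⟩
  rw [lt_div_iff₀ hx0]
  exact neg_mul_lt_sin hx0
end

section
/- For every positive integer n and every real x, the Dirichlet kernel D_n(x) = ∑_{k=-n}^{n} e^{ikx} is real-valued and satisfies D_n(x) ≥ 2n·c₀ - C for some absolute constant C, where c₀ = min_{t ≠ 0} sin(t)/t. More precisely, letting m(n) := min_{x ∈ ℝ} D_n(x), one has |m(n)/n - 2c₀| ≪ 1/n, so in particular lim_{n→∞} m(n)/n = 2c₀. -/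
/-!
Pairing `e^{ikx}` with `e^{-ikx}` shows `D_n` is real, and telescoping gives
`sin (x/2) · D_n(x) = sin ((n + 1/2) x)`. By periodicity and evenness it suffices to take
`0 < x ≤ π`; with `N = n + 1/2`,
`D_n(x) = 2 sin (N x) / x + sin (N x) · (1 / sin (x/2) - 2 / x)`,
where the first term is at least `2 N c₀` and the bracket lies in `[0, 1]`, so `D_n ≥ 2 N c₀ - 1`.
Conversely, if `c₀ = sin t₀ / t₀` with `0 < t₀ < N`, then at `x = t₀ / N` the inequality
`sin (x/2) ≤ x/2` gives `D_n(x) ≤ 2 N c₀`; for the finitely many `n ≤ t₀` we use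
`D_n(π) ≤ 1` instead. Hence `|m(n) - 2 n c₀|` is bounded uniformly in `n`.
-/

open Real Filter Topology

/-- The Dirichlet kernel `D_n(x) = ∑_{k=-n}^{n} e^{ikx}`. -/
noncomputable def dirichletKer (n : ℕ) (x : ℝ) : ℂ :=
  ∑ k ∈ Finset.Icc (-(n : ℤ)) (n : ℤ), Complex.exp ((k : ℂ) * (x : ℂ) * Complex.I)

/-- `m(n) = min_x D_n(x)`. -/
noncomputable def dirichletMin (n : ℕ) : ℝ :=
  sInf (Set.range fun x : ℝ => (dirichletKer n x).re)

open Finset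

lemma sum_Icc_neg_comp {M : Type*} [AddCommMonoid M] (f : ℤ → M) (n : ℤ) :
    ∑ k ∈ Icc (-n) n, f (-k) = ∑ k ∈ Icc (-n) n, f k :=
  sum_equiv (Equiv.neg ℤ) (fun k => by simp only [mem_Icc, Equiv.neg_apply]; omega)
    (fun _ _ => rfl)

lemma exp_intCast_mul_I_eq (k : ℤ) (x : ℝ) :
    Complex.exp ((k : ℂ) * (x : ℂ) * Complex.I) = Complex.exp (((k * x : ℝ) : ℂ) * Complex.I) := by
  push_cast; rfl

lemma dirichletKer_re (n : ℕ) (x : ℝ) :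
    (dirichletKer n x).re = ∑ k ∈ Icc (-(n : ℤ)) n, cos (k * x) := by
  simp only [dirichletKer, Complex.re_sum, exp_intCast_mul_I_eq, Complex.exp_ofReal_mul_I_re]

lemma dirichletKer_im (n : ℕ) (x : ℝ) : (dirichletKer n x).im = 0 := by
  have hsum : ∑ k ∈ Icc (-(n : ℤ)) n, sin (k * x) = -∑ k ∈ Icc (-(n : ℤ)) n, sin (k * x) := by
    rw [← sum_neg_distrib, ← sum_Icc_neg_comp]
    simp [neg_mul, sin_neg]
  simp only [dirichletKer, Complex.im_sum, exp_intCast_mul_I_eq, Complex.exp_ofReal_mul_I_im]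
  linarith

lemma Icc_neg_succ_succ (n : ℕ) :
    Icc (-(n + 1 : ℤ)) (n + 1) = insert (-(n + 1 : ℤ)) (insert (n + 1 : ℤ) (Icc (-n : ℤ) n)) := by
  ext m; simp only [mem_Icc, mem_insert]; omega

lemma sin_half_mul_dirichletKer_re (n : ℕ) (x : ℝ) :
    sin (x / 2) * (dirichletKer n x).re = sin ((n + 1 / 2) * x) := by
  induction n with
  | zero => simp [dirichletKer_re, div_eq_inv_mul]
  | succ n ih =>
    rw [dirichletKer_re] at ih ⊢
    push_cast
    rw [Icc_neg_succ_succ, sum_insert (by simp only [mem_insert, mem_Icc]; omega),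
      sum_insert (by simp only [mem_Icc]; omega)]
    have hstep : sin ((n + 1 + 1 / 2) * x) - sin ((n + 1 / 2) * x)
        = 2 * sin (x / 2) * cos ((n + 1) * x) := by
      rw [sin_sub_sin]; ring_nf
    push_cast
    rw [neg_mul, cos_neg]
    linear_combination ih - hstep

lemma dirichletKer_re_eq_div {n : ℕ} {x : ℝ} (hx : sin (x / 2) ≠ 0) :
    (dirichletKer n x).re = sin ((n + 1 / 2) * x) / sin (x / 2) := by
  rw [eq_div_iff hx, mul_comm, sin_half_mul_dirichletKer_re]

lemma dirichletKer_re_zero (n : ℕ) : (dirichletKer n 0).re = 2 * n + 1 := by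
  rw [dirichletKer_re]
  simp only [mul_zero, cos_zero, sum_const, Int.card_Icc, nsmul_eq_mul, mul_one]
  rw [show (n : ℤ) + 1 - -(n : ℤ) = ((2 * n + 1 : ℕ) : ℤ) by push_cast; ring, Int.toNat_natCast]
  push_cast; ring

lemma dirichletKer_re_periodic (n : ℕ) :
    Function.Periodic (fun x => (dirichletKer n x).re) (2 * π) := fun x => by
  simp only [dirichletKer_re, mul_add, cos_add_int_mul_two_pi]

lemma dirichletKer_re_neg (n : ℕ) (x : ℝ) : (dirichletKer n (-x)).re = (dirichletKer n x).re := by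
  simp only [dirichletKer_re, mul_neg, cos_neg]

lemma exists_mem_Icc_dirichletKer_re_eq (n : ℕ) (x : ℝ) :
    ∃ y ∈ Set.Icc 0 π, (dirichletKer n x).re = (dirichletKer n y).re := by
  obtain ⟨y, ⟨hy₁, hy₂⟩, hxy⟩ := (dirichletKer_re_periodic n).exists_mem_Ico two_pi_pos x (-π)
  refine ⟨|y|, ⟨abs_nonneg y, abs_le.2 ⟨hy₁, by linarith⟩⟩, hxy.trans ?_⟩
  rcases abs_choice y with h | h <;> rw [h]
  exact (dirichletKer_re_neg n y).symm

lemma one_div_sin_sub_one_div_le_one {u : ℝ} (hu₀ : 0 < u) (hu : u ≤ π / 2) :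
    1 / sin u - 1 / u ≤ 1 := by
  have hjordan : 2 / π * u ≤ sin u := mul_le_sin hu₀.le hu
  have hcube : u - u ^ 3 / 6 < sin u := sin_gt_sub_cube hu₀
  have hsin : 0 < sin u := lt_of_lt_of_le (by positivity) hjordan
  -- `(u - sin u) / (u sin u) ≤ (u³/6) / (2u²/π) = π u / 12 ≤ π² / 24 < 1`
  rw [div_sub_div _ _ hsin.ne' hu₀.ne', div_le_one (by positivity)]
  have hπu : π * u ≤ 8 := by nlinarith [pi_le_four, pi_pos]
  have : u ^ 3 ≤ 6 * u * (2 / π * u) := by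
    rw [show 6 * u * (2 / π * u) = 12 * u ^ 2 / π by ring, le_div_iff₀ pi_pos]
    nlinarith [sq_nonneg u]
  nlinarith [mul_le_mul_of_nonneg_left hjordan (by positivity : (0 : ℝ) ≤ 6 * u)]

lemma dirichletKer_re_ge_of_mem_Ioc {c₀ : ℝ} (hmin : ∀ t : ℝ, t ≠ 0 → c₀ ≤ sin t / t) (n : ℕ)
    {x : ℝ} (hx₀ : 0 < x) (hx : x ≤ π) : (2 * n + 1) * c₀ - 1 ≤ (dirichletKer n x).re := by
  set N : ℝ := n + 1 / 2
  have hs : 0 < sin (x / 2) := sin_pos_of_pos_of_lt_pi (by positivity) (by linarith [pi_pos])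
  have hsinc : c₀ * (N * x) ≤ sin (N * x) :=
    (le_div_iff₀ (by positivity)).1 (hmin _ (by positivity))
  set gap := 1 / sin (x / 2) - 1 / (x / 2)
  have hgap₀ : 0 ≤ gap := sub_nonneg.2 (one_div_le_one_div_of_le hs (sin_le (by positivity)))
  have hgap₁ : gap ≤ 1 := one_div_sin_sub_one_div_le_one (by positivity) (by linarith)
  have hmain : 2 * N * c₀ ≤ sin (N * x) / (x / 2) := by
    rw [le_div_iff₀ (by positivity)]; linarith
  have hrest : -1 ≤ sin (N * x) * gap := by
    have := neg_one_le_sin (N * x)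
    nlinarith [mul_nonneg (by linarith : 0 ≤ sin (N * x) + 1) hgap₀]
  calc (2 * n + 1) * c₀ - 1 = 2 * N * c₀ - 1 := by ring
    _ ≤ sin (N * x) / (x / 2) + sin (N * x) * gap := by linarith
    _ = (dirichletKer n x).re := by
      rw [dirichletKer_re_eq_div hs.ne']; simp only [gap, N]; field_simp; ring

lemma dirichletKer_re_ge {c₀ : ℝ} (hmin : ∀ t : ℝ, t ≠ 0 → c₀ ≤ sin t / t) (n : ℕ) (x : ℝ) :
    (2 * n + 1) * c₀ - 1 ≤ (dirichletKer n x).re := by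
  obtain ⟨y, ⟨hy₀, hy⟩, hxy⟩ := exists_mem_Icc_dirichletKer_re_eq n x
  rw [hxy]
  rcases hy₀.eq_or_lt with rfl | hy₀
  · have hc₀ : c₀ ≤ 0 := by simpa using hmin π pi_ne_zero
    rw [dirichletKer_re_zero]
    nlinarith
  · exact dirichletKer_re_ge_of_mem_Ioc hmin n hy₀ hy

lemma bddBelow_range_dirichletKer_re (n : ℕ) :
    BddBelow (Set.range fun x => (dirichletKer n x).re) :=
  ⟨#(Icc (-(n : ℤ)) n) • (-1), Set.forall_mem_range.2 fun x => by
    rw [dirichletKer_re]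
    exact card_nsmul_le_sum _ _ _ fun k _ => neg_one_le_cos _⟩

lemma dirichletMin_le (n : ℕ) (x : ℝ) : dirichletMin n ≤ (dirichletKer n x).re :=
  csInf_le (bddBelow_range_dirichletKer_re n) ⟨x, rfl⟩

lemma le_dirichletMin {n : ℕ} {b : ℝ} (h : ∀ x, b ≤ (dirichletKer n x).re) : b ≤ dirichletMin n :=
  le_csInf (Set.range_nonempty _) (Set.forall_mem_range.2 h)

lemma dirichletMin_le_one (n : ℕ) : dirichletMin n ≤ 1 := by
  refine (dirichletMin_le n π).trans ?_
  rw [dirichletKer_re_eq_div (by simp), sin_pi_div_two, div_one]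
  exact sin_le_one _

lemma dirichletMin_le_of_lt {n : ℕ} {t : ℝ} (ht : 0 < t) (hsin : sin t ≤ 0)
    (htn : t < n + 1 / 2) : dirichletMin n ≤ (2 * n + 1) * (sin t / t) := by
  set N : ℝ := n + 1 / 2
  have hN : 0 < N := by positivity
  set x := t / N
  have hx₀ : 0 < x / 2 := by positivity
  have hx : x / 2 < π := by
    have : x < 1 := (div_lt_one hN).2 htn
    linarith [pi_gt_three]
  have hs : 0 < sin (x / 2) := sin_pos_of_pos_of_lt_pi hx₀ hx
  refine (dirichletMin_le n x).trans ?_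
  calc (dirichletKer n x).re = sin t / sin (x / 2) := by
        rw [dirichletKer_re_eq_div hs.ne', mul_div_cancel₀ t hN.ne']
    _ ≤ sin t / (x / 2) := by
        rw [div_le_div_iff₀ hs hx₀]; nlinarith [sin_le hx₀.le]
    _ = (2 * n + 1) * (sin t / t) := by
        simp only [x, N]; field_simp

lemma abs_dirichletMin_sub_le {c₀ : ℝ} (hmin : ∀ t : ℝ, t ≠ 0 → c₀ ≤ sin t / t)
    (hatt : ∃ t : ℝ, t ≠ 0 ∧ sin t / t = c₀) :
    ∃ C, ∀ n : ℕ, |dirichletMin n - n * (2 * c₀)| ≤ C := by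
  have hc₀ : c₀ ≤ 0 := by simpa using hmin π pi_ne_zero
  obtain ⟨t, ht₀, rfl⟩ : ∃ t : ℝ, 0 < t ∧ sin t / t = c₀ := by
    obtain ⟨t, ht, rfl⟩ := hatt
    rcases ht.lt_or_gt with ht | ht
    · exact ⟨-t, neg_pos.2 ht, by rw [sin_neg, neg_div_neg_eq]⟩
    · exact ⟨t, ht, rfl⟩
  have hsin : sin t ≤ 0 := by
    simpa [div_nonpos_iff, ht₀, ht₀.not_ge, ht₀.le] using hc₀
  refine ⟨1 - (2 * t + 1) * (sin t / t), fun n => abs_le.2 ⟨?_, ?_⟩⟩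
  · have := le_dirichletMin (dirichletKer_re_ge hmin n)
    nlinarith
  · rcases lt_or_ge t (n + 1 / 2) with htn | htn
    · have := dirichletMin_le_of_lt ht₀ hsin htn
      nlinarith
    · have := dirichletMin_le_one n
      nlinarith

lemma abs_div_sub_le_of_abs_sub_mul_le {x a C r : ℝ} (hr : 0 < r) (h : |x - r * a| ≤ C) :
    |x / r - a| ≤ C / r := by
  rw [show x / r - a = (x - r * a) / r by field_simp, abs_div, abs_of_pos hr]
  exact div_le_div_of_nonneg_right h hr.le

lemma tendsto_div_natCast_of_abs_sub_mul_le {f : ℕ → ℝ} {a C : ℝ}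
    (h : ∀ n : ℕ, |f n - n * a| ≤ C) : Tendsto (fun n : ℕ => f n / n) atTop (𝓝 a) := by
  rw [← tendsto_sub_nhds_zero_iff]
  refine squeeze_zero_norm' ?_ (tendsto_const_div_atTop_nhds_zero_nat C)
  filter_upwards [eventually_gt_atTop 0] with n hn
  exact abs_div_sub_le_of_abs_sub_mul_le (by exact_mod_cast hn) (h n)

/-- The Dirichlet kernel is real-valued, bounded below by `2n·c₀ - C` for an absolute
constant `C`, and `|m(n)/n - 2c₀| ≪ 1/n`, so in particular `m(n)/n → 2c₀`,
where `c₀ = min_{t ≠ 0} sin t / t`. -/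
theorem stmt_3 (c₀ : ℝ)
    (hmin : ∀ t : ℝ, t ≠ 0 → c₀ ≤ Real.sin t / t)
    (hatt : ∃ t : ℝ, t ≠ 0 ∧ Real.sin t / t = c₀) :
    (∀ (n : ℕ) (x : ℝ), (dirichletKer n x).im = 0) ∧
    (∃ C : ℝ, ∀ (n : ℕ), 1 ≤ n → ∀ x : ℝ,
      2 * (n : ℝ) * c₀ - C ≤ (dirichletKer n x).re) ∧
    (∃ C : ℝ, ∀ (n : ℕ), 1 ≤ n →
      |dirichletMin n / (n : ℝ) - 2 * c₀| ≤ C / (n : ℝ)) ∧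
    Tendsto (fun n : ℕ => dirichletMin n / (n : ℝ)) atTop (𝓝 (2 * c₀)) := by
  obtain ⟨C, hC⟩ := abs_dirichletMin_sub_le hmin hatt
  refine ⟨dirichletKer_im, ⟨1 - c₀, fun n _ x => ?_⟩,
    ⟨C, fun n hn => abs_div_sub_le_of_abs_sub_mul_le (by exact_mod_cast hn) (hC n)⟩,
    tendsto_div_natCast_of_abs_sub_mul_le hC⟩
  linarith [dirichletKer_re_ge hmin n x]
end

section
/- Let g : ℝ → ℝ be continuous, even, nonnegative, integrable, with \hat{g} supported in [-1,1], \hat{g} continuous, and suppose min_{0 ≤ α ≤ 1} (\hat{g}(α) + \hat{g}(1-α)) = 1. Then for every integer N ≥ 1 and every α ∈ [0, N-1], the sum ∑_{j=1}^{N} \hat{g}(α - (j-1)) equals \hat{g}({α}) + \hat{g}(1 - {α}) and hence is at least 1, where {α} denotes the fractional part of α. -/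
/-!
Since `g` is even, so is `gh`, and by continuity `gh` vanishes on `|y| ≥ 1`, not only on
`|y| > 1`. Hence among the translates `α - j`, `0 ≤ j < N`, only `j = ⌊α⌋` and `j = ⌊α⌋ + 1`
can contribute, and they give `gh {α} + gh ({α} - 1) = gh {α} + gh (1 - {α})`, which is at
least `1` by the normalization of `gh`.
-/

open Real MeasureTheory Set

theorem fourier_neg_of_even {V E : Type*} [NormedAddCommGroup E] [NormedSpace ℂ E]
    [NormedAddCommGroup V] [InnerProductSpace ℝ V] [MeasurableSpace V] [BorelSpace V]
    [FiniteDimensional ℝ V] {f : V → E} (hf : ∀ x, f (-x) = f x) (w : V) :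
    FourierTransform.fourier f (-w) = FourierTransform.fourier f w := by
  rw [← fourierInv_eq_fourier_neg, fourierInv_eq_fourier_comp_neg]
  simp_rw [hf]

theorem Continuous.eq_zero_of_le_abs {f : ℝ → ℝ} (hf : Continuous f) {r : ℝ}
    (h : ∀ y, r < |y| → f y = 0) {y : ℝ} (hy : r ≤ |y|) : f y = 0 := by
  have hzero : EqOn f 0 (Iio (-r) ∪ Ioi r) := by
    rintro x (hx | hx)
    · exact h x (lt_abs.mpr (Or.inr (lt_neg_of_lt_neg hx)))
    · exact h x (lt_abs.mpr (Or.inl hx))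
  have hclosure := hzero.closure hf continuous_const
  rw [closure_union, closure_Iio, closure_Ioi] at hclosure
  rcases le_abs'.mp hy with hy | hy
  · exact hclosure (Or.inl hy)
  · exact hclosure (Or.inr hy)

theorem one_le_abs_sub_natCast {α : ℝ} (hα : 0 ≤ α) {c : ℕ} (hc₀ : c ≠ ⌊α⌋₊)
    (hc₁ : c ≠ ⌊α⌋₊ + 1) : 1 ≤ |α - c| := by
  rcases lt_or_gt_of_ne hc₀ with hc | hc
  · have : (c : ℝ) + 1 ≤ ⌊α⌋₊ := by exact_mod_cast hc
    have := Nat.floor_le hα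
    rw [le_abs]; left; linarith
  · have : (⌊α⌋₊ : ℝ) + 2 ≤ c := by exact_mod_cast (by omega : ⌊α⌋₊ + 2 ≤ c)
    have := Nat.lt_floor_add_one α
    rw [le_abs]; right; linarith

theorem Int.fract_eq_sub_natFloor {α : ℝ} (hα : 0 ≤ α) : Int.fract α = α - ⌊α⌋₊ := by
  rw [Int.fract, ← Int.natCast_floor_eq_floor hα, Int.cast_natCast]

theorem sum_range_sub_natCast_eq_fract {f : ℝ → ℝ} (heven : ∀ y, f (-y) = f y)
    (hsupp : ∀ y, 1 ≤ |y| → f y = 0) {N : ℕ} {α : ℝ} (hα₀ : 0 ≤ α) (hαN : α ≤ N - 1) :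
    ∑ j ∈ Finset.range N, f (α - j) = f (Int.fract α) + f (1 - Int.fract α) := by
  set m := ⌊α⌋₊
  have hm : (m : ℝ) ≤ α := Nat.floor_le hα₀
  rw [Finset.sum_eq_add m (m + 1) (by omega)]
  · rw [Int.fract_eq_sub_natFloor hα₀, ← heven (1 - _)]
    congr 2
    push_cast
    ring
  · intro c _ hc
    exact hsupp _ (one_le_abs_sub_natCast hα₀ hc.1 hc.2)
  · intro hmN
    have : (N : ℝ) ≤ m := by exact_mod_cast not_lt.mp (Finset.mem_range.not.mp hmN)
    linarith
  · intro hmN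
    have : (N : ℝ) ≤ m + 1 := by exact_mod_cast not_lt.mp (Finset.mem_range.not.mp hmN)
    exact hsupp _ (by rw [abs_of_nonpos (by push_cast; linarith)]; push_cast; linarith)

theorem stmt_5_general (g gh : ℝ → ℝ)
    (heven : ∀ x, g (-x) = g x)
    (hFT : ∀ y : ℝ, FourierTransform.fourier (fun x => (g x : ℂ)) y = (gh y : ℂ))
    (hghcont : Continuous gh)
    (hsupp : ∀ y : ℝ, 1 < |y| → gh y = 0)
    (hmin1 : ∀ α ∈ Set.Icc (0:ℝ) 1, 1 ≤ gh α + gh (1 - α)) :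
    ∀ (N : ℕ), 1 ≤ N → ∀ α ∈ Set.Icc (0:ℝ) ((N : ℝ) - 1),
      (∑ j ∈ Finset.Icc 1 N, gh (α - ((j : ℝ) - 1)))
        = gh (Int.fract α) + gh (1 - Int.fract α) ∧
      1 ≤ ∑ j ∈ Finset.Icc 1 N, gh (α - ((j : ℝ) - 1)) := by
  intro N _ α ⟨hα₀, hαN⟩
  have hgh_even : ∀ y, gh (-y) = gh y := fun y => by
    have := fourier_neg_of_even (f := fun x => (g x : ℂ)) (by simp [heven]) y
    rwa [hFT, hFT, Complex.ofReal_inj] at this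
  have hsum : ∑ j ∈ Finset.Icc 1 N, gh (α - ((j : ℝ) - 1))
      = gh (Int.fract α) + gh (1 - Int.fract α) := by
    rw [← Finset.Ico_add_one_right_eq_Icc, Finset.sum_Ico_eq_sum_range]
    simpa [add_comm] using sum_range_sub_natCast_eq_fract hgh_even
      (fun y hy => hghcont.eq_zero_of_le_abs hsupp hy) hα₀ hαN
  exact ⟨hsum, hsum ▸ hmin1 _ ⟨Int.fract_nonneg α, (Int.fract_lt_one α).le⟩⟩

/-- Let `g` be continuous, even, nonnegative, integrable, with Fourier transform `gh`
real-valued, continuous, supported in `[-1,1]`, and normalized so that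
`min_{0 ≤ α ≤ 1} (gh(α) + gh(1-α)) = 1`. Then for every `N ≥ 1` and every
`α ∈ [0, N-1]`, `∑_{j=1}^{N} gh(α - (j-1)) = gh({α}) + gh(1 - {α}) ≥ 1`. -/
theorem stmt_5 (g gh : ℝ → ℝ)
    (hcont : Continuous g) (heven : ∀ x, g (-x) = g x) (hnonneg : ∀ x, 0 ≤ g x)
    (hint : Integrable g)
    (hFT : ∀ y : ℝ, FourierTransform.fourier (fun x => (g x : ℂ)) y = (gh y : ℂ))
    (hghcont : Continuous gh)
    (hsupp : ∀ y : ℝ, 1 < |y| → gh y = 0)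
    (hmin1 : ∀ α ∈ Set.Icc (0:ℝ) 1, 1 ≤ gh α + gh (1 - α))
    (hmin2 : ∃ α ∈ Set.Icc (0:ℝ) 1, gh α + gh (1 - α) = 1) :
    ∀ (N : ℕ), 1 ≤ N → ∀ α ∈ Set.Icc (0:ℝ) ((N : ℝ) - 1),
      (∑ j ∈ Finset.Icc 1 N, gh (α - ((j : ℝ) - 1)))
        = gh (Int.fract α) + gh (1 - Int.fract α) ∧
      1 ≤ ∑ j ∈ Finset.Icc 1 N, gh (α - ((j : ℝ) - 1)) :=
  stmt_5_general g gh heven hFT hghcont hsupp hmin1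
end

section
/- Define for Δ ∈ [1,2] the cubic polynomial r_Δ(x) = (Δ²/12)x³ - (Δ/2)x² + (1-Δ)x + Δ/2 - 1/(3Δ). Then for every Δ ∈ [4/3, 2], r_Δ has a unique root in the open interval (0,1), and this root lies in (2/Δ - 1, 1); in particular r_Δ(2/Δ - 1) > 0 and r_Δ(1) < 0. -/
open Real Set

/-!
On `[0, 1]` the cubic `r_Δ` is strictly decreasing, since
`r_Δ'(x) = Δx (Δx/4 - 1) + (1 - Δ) < 0` for `x ∈ (0, 1)` and `1 ≤ Δ ≤ 4`. Clearing the denominator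
`12Δ`, the signs of `r_Δ(1)` and `r_Δ(2/Δ - 1)` are those of `Δ³ - 12Δ² + 12Δ - 4 < 0` and
`-Δ³ + 18Δ² - 24Δ + 4 > 0`, so the intermediate value theorem gives a root in `(2/Δ - 1, 1)`, and
monotonicity makes it the only root in `(0, 1)`.
-/

noncomputable def rCubic (Δ x : ℝ) : ℝ :=
  Δ ^ 2 / 12 * x ^ 3 - Δ / 2 * x ^ 2 + (1 - Δ) * x + Δ / 2 - 1 / (3 * Δ)

lemma continuous_rCubic (Δ : ℝ) : Continuous (rCubic Δ) := by
  unfold rCubic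
  fun_prop

lemma hasDerivAt_rCubic (Δ x : ℝ) :
    HasDerivAt (rCubic Δ) (Δ * x * (Δ * x / 4 - 1) + (1 - Δ)) x := by
  have h := (((((hasDerivAt_id' x).fun_pow 3).const_mul (Δ ^ 2 / 12)).fun_sub
    (((hasDerivAt_id' x).fun_pow 2).const_mul (Δ / 2))).fun_add
    ((hasDerivAt_id' x).const_mul (1 - Δ))).add_const (Δ / 2) |>.sub_const (1 / (3 * Δ))
  exact h.congr_deriv (by push_cast; ring)

lemma strictAntiOn_rCubic {Δ : ℝ} (h1 : 1 ≤ Δ) (h4 : Δ ≤ 4) : StrictAntiOn (rCubic Δ) (Icc 0 1) := by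
  refine strictAntiOn_of_deriv_neg (convex_Icc 0 1) (continuous_rCubic Δ).continuousOn ?_
  intro x hx
  rw [interior_Icc] at hx
  rw [(hasDerivAt_rCubic Δ x).deriv]
  have hΔx : 0 < Δ * x := mul_pos (by linarith) hx.1
  have hΔx4 : Δ * x < 4 := by nlinarith [hx.2]
  nlinarith [mul_pos hΔx (by linarith : 0 < 1 - Δ * x / 4)]

lemma rCubic_one_neg {Δ : ℝ} (h0 : 0 < Δ) (h2 : Δ ≤ 2) : rCubic Δ 1 < 0 := by
  have key : rCubic Δ 1 = (Δ ^ 3 - 12 * Δ ^ 2 + 12 * Δ - 4) / (12 * Δ) := by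
    unfold rCubic
    field_simp
    ring
  rw [key]
  exact div_neg_of_neg_of_pos (by nlinarith [mul_nonneg (sq_nonneg Δ) (sub_nonneg.mpr h2), sq_nonneg (5 * Δ - 3)]) (by positivity)

lemma rCubic_two_div_sub_one_pos {Δ : ℝ} (h43 : 4 / 3 ≤ Δ) (h2 : Δ ≤ 2) :
    0 < rCubic Δ (2 / Δ - 1) := by
  have key : rCubic Δ (2 / Δ - 1) = (-Δ ^ 3 + 18 * Δ ^ 2 - 24 * Δ + 4) / (12 * Δ) := by
    unfold rCubic
    field_simp
    ring
  rw [key]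
  have hab := mul_nonneg (sub_nonneg.mpr h43) (sub_nonneg.mpr h2)
  exact div_pos (by nlinarith [mul_nonneg hab (sub_nonneg.mpr h2)]) (by linarith)

/-- For `Δ ∈ [4/3, 2]`, the cubic `r_Δ(x) = (Δ²/12)x³ - (Δ/2)x² + (1-Δ)x + Δ/2 - 1/(3Δ)`
has a unique root in `(0,1)`; this root lies in `(2/Δ - 1, 1)`; in particular
`r_Δ(2/Δ - 1) > 0` and `r_Δ(1) < 0`. -/
theorem stmt_9 (Δ : ℝ) (hΔ : Δ ∈ Set.Icc (4/3 : ℝ) 2) :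
    (∃! x : ℝ, x ∈ Set.Ioo (0:ℝ) 1 ∧
      Δ ^ 2 / 12 * x ^ 3 - Δ / 2 * x ^ 2 + (1 - Δ) * x + Δ / 2 - 1 / (3 * Δ) = 0) ∧
    (∀ x : ℝ, x ∈ Set.Ioo (0:ℝ) 1 →
      Δ ^ 2 / 12 * x ^ 3 - Δ / 2 * x ^ 2 + (1 - Δ) * x + Δ / 2 - 1 / (3 * Δ) = 0 →
      x ∈ Set.Ioo (2 / Δ - 1) 1) ∧
    0 < Δ ^ 2 / 12 * (2 / Δ - 1) ^ 3 - Δ / 2 * (2 / Δ - 1) ^ 2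
        + (1 - Δ) * (2 / Δ - 1) + Δ / 2 - 1 / (3 * Δ) ∧
    Δ ^ 2 / 12 * 1 ^ 3 - Δ / 2 * 1 ^ 2 + (1 - Δ) * 1 + Δ / 2 - 1 / (3 * Δ) < 0 := by
  obtain ⟨h43, h2⟩ := hΔ
  have hpos := rCubic_two_div_sub_one_pos h43 h2
  have hneg := rCubic_one_neg (by linarith) h2
  have hanti := strictAntiOn_rCubic (Δ := Δ) (by linarith) (by linarith)
  have ha0 : 0 ≤ 2 / Δ - 1 := by
    rw [sub_nonneg, le_div_iff₀ (by linarith)]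
    linarith
  have ha1 : 2 / Δ - 1 < 1 := by
    rw [sub_lt_iff_lt_add, div_lt_iff₀ (by linarith)]
    linarith
  obtain ⟨c, ⟨hac, hc1⟩, hc⟩ :=
    intermediate_value_Ioo' ha1.le (continuous_rCubic Δ).continuousOn ⟨hneg, hpos⟩
  have huniq : ∀ x ∈ Ioo (0 : ℝ) 1, rCubic Δ x = 0 → x = c := fun x hx hx0 =>
    hanti.injOn (Ioo_subset_Icc_self hx) ⟨ha0.trans hac.le, hc1.le⟩ (hx0.trans hc.symm)
  exact ⟨⟨c, ⟨⟨ha0.trans_lt hac, hc1⟩, hc⟩, fun x hx => huniq x hx.1 hx.2⟩,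
    fun x hx hx0 => huniq x hx hx0 ▸ ⟨hac, hc1⟩, hpos, hneg⟩
end

section
/- Let Δ ∈ [1,2], let n ≥ 0 be an integer and δ > 0 satisfy Δ(n-1) + 2δ = ℓ. Define N = n+2 triangle functions: \hat{g}_j(α) = (1-|α|/Δ)_+ for 2 ≤ j ≤ n+1, and \hat{g}_1(α) = \hat{g}_{n+2}(α) = (δ/Δ)(1-|α|/δ)_+, translated by ξ₁ = 0, ξ_j = δ + Δ(j-2) for 2 ≤ j ≤ n+1, and ξ_{n+2} = ℓ. Then for all α ∈ [0, ℓ], ∑_{j=1}^{N} \hat{g}_j(α - ξ_j) ≥ 1. -/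
/-!
Every triangle has slopes `±1/Δ`: the end triangles `(δ/Δ)(1 - |x|/δ)_+` are exactly
`(δ/Δ - |x|/Δ)_+`. Hence between two consecutive centres `ξ_j ≤ α ≤ ξ_{j+1}` the two
neighbouring triangles add up to the constant `h_j + h_{j+1} - (ξ_{j+1} - ξ_j)/Δ`, and
`Δ(n-1) + 2δ = ℓ` makes this constant equal to `1` for every gap (`δ, Δ, …, Δ, δ`, or the
single gap `2δ - Δ` when `n = 0`). The remaining triangles are nonnegative.
-/

noncomputable def tent (s h c x : ℝ) : ℝ := max (h - |x - c| / s) 0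

lemma tent_nonneg (s h c x : ℝ) : 0 ≤ tent s h c x := le_max_right _ _

lemma one_le_tent_add_tent {s h k a b x : ℝ} (ha : a ≤ x) (hb : x ≤ b)
    (hhk : h + k = 1 + (b - a) / s) : 1 ≤ tent s h a x + tent s k b x := by
  have hsum : (h - |x - a| / s) + (k - |x - b| / s) = 1 := by
    rw [abs_of_nonneg (sub_nonneg.mpr ha), abs_of_nonpos (sub_nonpos.mpr hb)]
    linear_combination hhk
  unfold tent
  linarith [le_max_left (h - |x - a| / s) 0, le_max_left (k - |x - b| / s) 0]

lemma div_mul_max_one_sub_abs_div_eq_tent {s r : ℝ} (hs : 0 ≤ s) (hr : 0 < r) (x c : ℝ) :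
    r / s * max (1 - |x - c| / r) 0 = tent s (r / s) c x := by
  rw [tent, mul_max_of_nonneg _ _ (by positivity), mul_zero, mul_sub, mul_one]
  congr 2
  field_simp

lemma exists_le_apply_le_apply_succ {β : Type*} [LinearOrder β] {f : ℕ → β} {a : β} {m k : ℕ}
    (hmk : m < k) (hm : f m ≤ a) (hk : a ≤ f k) :
    ∃ j, m ≤ j ∧ j < k ∧ f j ≤ a ∧ a ≤ f (j + 1) := by
  induction k with
  | zero => omega
  | succ k ih =>
    by_cases hfk : f k ≤ a
    · exact ⟨k, by omega, k.lt_succ_self, hfk, hk⟩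
    · have hmk' : m < k := lt_of_le_of_ne (Nat.le_of_lt_succ hmk) (by rintro rfl; exact hfk hm)
      obtain ⟨j, hmj, hjk, hj⟩ := ih hmk' (not_le.mp hfk).le
      exact ⟨j, hmj, hjk.trans k.lt_succ_self, hj⟩

-- The centre `ξ_j` and the height `h_j` of the `j`-th triangle.
noncomputable def majorantNode (δ Δ ℓ : ℝ) (n j : ℕ) : ℝ :=
  if j = 1 then 0 else if j = n + 2 then ℓ else δ + Δ * ((j : ℝ) - 2)

noncomputable def majorantHeight (δ Δ : ℝ) (n j : ℕ) : ℝ :=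
  if j = 1 ∨ j = n + 2 then δ / Δ else 1

lemma majorant_summand_eq_tent {δ Δ : ℝ} (hδ : 0 < δ) (hΔ : 0 < Δ) (ℓ α : ℝ) (n j : ℕ) :
    (if j = 1 ∨ j = n + 2 then
        (δ / Δ) * max (1 - |α - (if j = 1 then 0 else ℓ)| / δ) 0
      else
        max (1 - |α - (δ + Δ * ((j : ℝ) - 2))| / Δ) 0) =
      tent Δ (majorantHeight δ Δ n j) (majorantNode δ Δ ℓ n j) α := by
  by_cases hend : j = 1 ∨ j = n + 2
  · rw [if_pos hend, majorantHeight, if_pos hend,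
      div_mul_max_one_sub_abs_div_eq_tent hΔ.le hδ, majorantNode]
    rcases hend with rfl | rfl <;> simp
  · have hj1 : j ≠ 1 := fun h => hend (Or.inl h)
    have hjn : j ≠ n + 2 := fun h => hend (Or.inr h)
    simp only [if_neg hend, tent, majorantHeight, majorantNode, if_neg hj1, if_neg hjn]

lemma majorantHeight_add_succ {δ Δ ℓ : ℝ} {n j : ℕ} (hΔ : Δ ≠ 0)
    (hℓ : Δ * ((n : ℝ) - 1) + 2 * δ = ℓ) (hj1 : 1 ≤ j) (hjn : j ≤ n + 1) :
    majorantHeight δ Δ n j + majorantHeight δ Δ n (j + 1) =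
      1 + (majorantNode δ Δ ℓ n (j + 1) - majorantNode δ Δ ℓ n j) / Δ := by
  subst hℓ
  obtain rfl | hj := eq_or_lt_of_le hj1
  · obtain rfl | hn := Nat.eq_zero_or_pos n
    · simp [majorantHeight, majorantNode]
      field_simp
      ring
    · simp [majorantHeight, majorantNode, hn.ne']
      ring
  · obtain rfl | hjn := eq_or_lt_of_le hjn
    · simp [majorantHeight, majorantNode, show n ≠ 0 by omega]
      field_simp
      ring
    · have hj_mid : ¬(j = 1 ∨ j = n + 2) := by omega
      have hj_succ_mid : ¬(j + 1 = 1 ∨ j + 1 = n + 2) := by omega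
      simp only [majorantHeight, majorantNode, if_neg hj_mid, if_neg hj_succ_mid,
        if_neg (not_or.mp hj_mid).1, if_neg (not_or.mp hj_mid).2,
        if_neg (not_or.mp hj_succ_mid).1, if_neg (not_or.mp hj_succ_mid).2]
      push_cast
      field_simp
      ring

/-- Majorant construction: `n+2` translated triangles (big triangles of base `2Δ` and
height `1`, plus two small end triangles of base `2δ` and height `δ/Δ`) majorize the
indicator of `[0, ℓ]` on `[0, ℓ]`, where `Δ(n-1) + 2δ = ℓ`. -/
theorem stmt_14 (Δ δ ℓ : ℝ) (n : ℕ) (hΔ : Δ ∈ Set.Icc (1:ℝ) 2) (hδ : 0 < δ)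
    (hℓ : Δ * ((n : ℝ) - 1) + 2 * δ = ℓ) :
    ∀ α ∈ Set.Icc (0:ℝ) ℓ,
      1 ≤ ∑ j ∈ Finset.Icc 1 (n + 2),
        (if j = 1 ∨ j = n + 2 then
          (δ / Δ) * max (1 - |α - (if j = 1 then 0 else ℓ)| / δ) 0
        else
          max (1 - |α - (δ + Δ * ((j : ℝ) - 2))| / Δ) 0) := by
  rintro α ⟨hα0, hαℓ⟩
  have hΔ0 : 0 < Δ := by linarith [hΔ.1]
  set node := majorantNode δ Δ ℓ n
  set height := majorantHeight δ Δ n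
  rw [Finset.sum_congr rfl fun j _ => majorant_summand_eq_tent hδ hΔ0 ℓ α n j]
  obtain ⟨j, hj1, hjn, hleft, hright⟩ :=
    exists_le_apply_le_apply_succ (f := node) (a := α) (m := 1) (k := n + 2) (by omega)
      (by simpa [node, majorantNode] using hα0) (by simpa [node, majorantNode] using hαℓ)
  calc 1 ≤ tent Δ (height j) (node j) α + tent Δ (height (j + 1)) (node (j + 1)) α :=
        one_le_tent_add_tent hleft hright (majorantHeight_add_succ hΔ0.ne' hℓ hj1 (by omega))
    _ = ∑ i ∈ {j, j + 1}, tent Δ (height i) (node i) α := by rw [Finset.sum_pair (by omega)]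
    _ ≤ ∑ i ∈ Finset.Icc 1 (n + 2), tent Δ (height i) (node i) α :=
        Finset.sum_le_sum_of_subset_of_nonneg
          (by intro i; simp only [Finset.mem_insert, Finset.mem_singleton, Finset.mem_Icc]; omega)
          (fun i _ _ => tent_nonneg _ _ _ _)
end
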